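/- arXiv:2405.10703 — 5 statements merged into one kernel-verified Lean document; each statement's English description precedes it below -/
import Mathlib

section
/- Let X be a set, let φ : X → ℝ and η : X → ℝ be arbitrary functions, let T : ℝ → ℝ be an odd, strictly increasing function, and let l_s, l_a be real numbers with 0 < l_a ≤ −l_s. Define h(x) = T(φ(x)) + l_s + l_a·cos(η(x)). Then the zero-superlevel set of h is contained in the zero-superlevel set of φ, i.e. {x ∈ X | h(x) ≥ 0} ⊆ {x ∈ X | φ(x) ≥ 0}. -/
/-- For arbitrary functions `φ η : X → ℝ`, an odd strictly increasing
`T : ℝ → ℝ`, and reals `0 < l_a ≤ -l_s`, the zero-superlevel set of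
`h x = T (φ x) + l_s + l_a * cos (η x)` is contained in the zero-superlevel set of `φ`. -/
theorem superlevel_subset_of_ogm_cbf {X : Type*} (φ η : X → ℝ) (T : ℝ → ℝ)
    (hT_odd : ∀ y : ℝ, T (-y) = -T y) (hT_mono : StrictMono T)
    (l_s l_a : ℝ) (hla_pos : 0 < l_a) (hla_le : l_a ≤ -l_s) :
    {x : X | T (φ x) + l_s + l_a * Real.cos (η x) ≥ 0} ⊆ {x : X | φ x ≥ 0} := by
  intro x hx
  simp only [Set.mem_setOf_eq] at hx ⊢
  have hT0 : T 0 = 0 := by have h := hT_odd 0; rw [neg_zero] at h; linarith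
  have hcos : l_a * Real.cos (η x) ≤ l_a := by
    nlinarith [Real.cos_le_one (η x)]
  have hTφ : T 0 ≤ T (φ x) := by rw [hT0]; linarith
  exact (hT_mono.le_iff_le).mp hTφ
end

section
/- Let E be a real normed vector space, let Ω ⊆ E be nonempty with Ω ≠ E, and let φ_Ω be the signed distance function of Ω. Let T : ℝ → ℝ be an odd, strictly increasing function, let η : E → ℝ be an arbitrary function, and let l_s, l_a be real numbers with 0 < l_a ≤ −l_s. Then {x ∈ E | T(φ_Ω(x)) + l_s + l_a·cos(η(x)) ≥ 0} ⊆ closure(Ω). -/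
open Metric Classical

/-- The signed distance function of a set `Ω`: the distance to the frontier of `Ω`,
taken positive inside `Ω` and negative outside. -/
noncomputable def signedDistSet {E : Type*} [NormedAddCommGroup E] [NormedSpace ℝ E]
    (Ω : Set E) (p : E) : ℝ :=
  if p ∈ Ω then infDist p (frontier Ω) else -infDist p (frontier Ω)

lemma StrictMono.nonneg_iff_map_nonneg_of_odd {α β : Type*} [AddCommGroup α] [LinearOrder α]
    [IsOrderedAddMonoid α] [AddCommGroup β] [LinearOrder β] [IsOrderedAddMonoid β] {T : α → β}
    (hT_mono : StrictMono T) (hT_odd : ∀ y, T (-y) = -T y) {y : α} : 0 ≤ T y ↔ 0 ≤ y := by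
  have hT0 : T 0 = 0 := self_eq_neg.1 (by simpa using hT_odd 0)
  rw [← hT0, hT_mono.le_iff_le]

lemma add_mul_cos_nonpos {l_s l_a : ℝ} (hla_nonneg : 0 ≤ l_a) (hla_le : l_a ≤ -l_s) (θ : ℝ) :
    l_s + l_a * Real.cos θ ≤ 0 := by
  nlinarith [Real.cos_le_one θ]

section SignedDist

variable {E : Type*} [NormedAddCommGroup E] [NormedSpace ℝ E] {Ω : Set E} {x : E}

lemma signedDistSet_of_notMem (hx : x ∉ Ω) : signedDistSet Ω x = -infDist x (frontier Ω) :=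
  if_neg hx

lemma mem_closure_of_signedDistSet_nonneg (hΩ : Ω.Nonempty) (hx : 0 ≤ signedDistSet Ω x) :
    x ∈ closure Ω := by
  by_cases hxΩ : x ∈ Ω
  · exact subset_closure hxΩ
  -- `E` is connected, so a nonempty proper subset has nonempty frontier.
  have hfrontier : (frontier Ω).Nonempty :=
    nonempty_frontier_iff.2 ⟨hΩ, fun h ↦ hxΩ (h ▸ Set.mem_univ x)⟩
  have hdist : infDist x (frontier Ω) = 0 := by
    rw [signedDistSet_of_notMem hxΩ] at hx
    exact le_antisymm (neg_nonneg.1 hx) infDist_nonneg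
  have : x ∈ closure (frontier Ω) := (mem_closure_iff_infDist_zero hfrontier).2 hdist
  rw [isClosed_frontier.closure_eq] at this
  exact frontier_subset_closure this

end SignedDist

theorem superlevel_subset_closure_of_ogm_cbf_general {E : Type*} [NormedAddCommGroup E]
    [NormedSpace ℝ E] (Ω : Set E) (hne : Ω.Nonempty)
    (T : ℝ → ℝ) (hT_odd : ∀ y : ℝ, T (-y) = -T y) (hT_mono : StrictMono T)
    (η : E → ℝ) (l_s l_a : ℝ) (hla_pos : 0 < l_a) (hla_le : l_a ≤ -l_s) :
    {x : E | T (signedDistSet Ω x) + l_s + l_a * Real.cos (η x) ≥ 0} ⊆ closure Ω := by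
  intro x (hx : T (signedDistSet Ω x) + l_s + l_a * Real.cos (η x) ≥ 0)
  have hbarrier := add_mul_cos_nonpos hla_pos.le hla_le (η x)
  refine mem_closure_of_signedDistSet_nonneg hne ?_
  rw [← hT_mono.nonneg_iff_map_nonneg_of_odd hT_odd]
  linarith

/-- For a nonempty proper subset `Ω` of a real normed vector space,
an odd strictly increasing `T`, an arbitrary `η`, and reals `0 < l_a ≤ -l_s`, the
zero-superlevel set of `x ↦ T (φ_Ω x) + l_s + l_a * cos (η x)` is contained in the
closure of `Ω`. -/
theorem superlevel_subset_closure_of_ogm_cbf {E : Type*} [NormedAddCommGroup E]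
    [NormedSpace ℝ E] (Ω : Set E) (hne : Ω.Nonempty) (hproper : Ω ≠ Set.univ)
    (T : ℝ → ℝ) (hT_odd : ∀ y : ℝ, T (-y) = -T y) (hT_mono : StrictMono T)
    (η : E → ℝ) (l_s l_a : ℝ) (hla_pos : 0 < l_a) (hla_le : l_a ≤ -l_s) :
    {x : E | T (signedDistSet Ω x) + l_s + l_a * Real.cos (η x) ≥ 0} ⊆ closure Ω :=
  superlevel_subset_closure_of_ogm_cbf_general Ω hne T hT_odd hT_mono η l_s l_a hla_pos hla_le
end

section
/- Let h : ℝ → ℝ be differentiable and let α : ℝ → ℝ be strictly increasing with α(0) = 0. If h(0) ≥ 0 and for every t ≥ 0 one has h'(t) ≥ −α(h(t)), then h(t) ≥ 0 for every t ≥ 0. -/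
/-- Scalar comparison lemma for forward invariance: if `h` is
differentiable, `α` is strictly increasing with `α 0 = 0`, `h 0 ≥ 0`, and
`h' t ≥ -α (h t)` for all `t ≥ 0`, then `h t ≥ 0` for all `t ≥ 0`. -/
theorem barrier_nonneg_of_deriv_ge {h : ℝ → ℝ} (hdiff : Differentiable ℝ h)
    {α : ℝ → ℝ} (hα_mono : StrictMono α) (hα_zero : α 0 = 0)
    (h0 : h 0 ≥ 0) (hineq : ∀ t : ℝ, 0 ≤ t → deriv h t ≥ -α (h t)) :
    ∀ t : ℝ, 0 ≤ t → h t ≥ 0 := by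
  intro t ht
  by_contra hneg
  push_neg at hneg
  set S : Set ℝ := Set.Icc 0 t ∩ {x | 0 ≤ h x} with hS
  have hScl : IsClosed S :=
    isClosed_Icc.inter (isClosed_le continuous_const hdiff.continuous)
  have hSne : S.Nonempty := ⟨0, ⟨le_refl 0, ht⟩, h0⟩
  have hSbdd : BddAbove S := (bddAbove_Icc).mono (Set.inter_subset_left)
  set s := sSup S with hs_def
  have hsmem : s ∈ S := hScl.csSup_mem hSne hSbdd
  obtain ⟨⟨hs0, hst⟩, hshs⟩ := hsmem
  have hst' : s < t := by
    rcases lt_or_eq_of_le hst with h' | h'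
    · exact h'
    · exact absurd (h' ▸ hshs) (not_le.mpr hneg)
  have hlt : ∀ x ∈ Set.Ioo s t, h x < 0 := by
    intro x hx
    by_contra hge
    push_neg at hge
    have : x ∈ S := ⟨⟨hs0.trans hx.1.le, hx.2.le⟩, hge⟩
    exact absurd (le_csSup hSbdd this) (not_le.mpr hx.1)
  have hmono : StrictMonoOn h (Set.Icc s t) := by
    apply StrictMonoOn.mono (s := Set.Icc s t) ?_ (le_refl _)
    apply strictMonoOn_of_deriv_pos (convex_Icc s t) hdiff.continuous.continuousOn
    intro x hx
    rw [interior_Icc] at hx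
    have hx0 : 0 ≤ x := hs0.trans hx.1.le
    have hαneg : α (h x) < 0 := hα_zero ▸ hα_mono (hlt x hx)
    have := hineq x hx0
    linarith
  have h1 := hmono ⟨le_refl s, hst⟩ ⟨hst, le_refl t⟩ hst'
  have h2 : 0 ≤ h s := hshs
  linarith
end

section
/- Let E and F be real normed vector spaces, g : E → (F →L[ℝ] E), let x : ℝ → E be a differentiable trajectory and u : ℝ → F a control signal with x'(t) = g(x(t))·u(t) for all t ≥ 0, let h : E → ℝ be differentiable, and let α : ℝ → ℝ be strictly increasing with α(0) = 0. If h(x(0)) ≥ 0 and for all t ≥ 0 the CBF inequality Dh(x(t))(g(x(t))·u(t)) ≥ −α(h(x(t))) holds, then h(x(t)) ≥ 0 for all t ≥ 0; that is, the set S = {p ∈ E | h(p) ≥ 0} is forward invariant along the trajectory. -/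
/-- Forward invariance of the zero-superlevel set of a CBF along a
closed-loop trajectory of a driftless control-affine system `ẋ = g(x)u`. -/
theorem forward_invariance_of_cbf {E F : Type*} [NormedAddCommGroup E] [NormedSpace ℝ E]
    [NormedAddCommGroup F] [NormedSpace ℝ F]
    (g : E → (F →L[ℝ] E)) (x : ℝ → E) (u : ℝ → F)
    (hx_diff : Differentiable ℝ x)
    (hdyn : ∀ t : ℝ, 0 ≤ t → deriv x t = g (x t) (u t))
    (h : E → ℝ) (hh_diff : Differentiable ℝ h)
    (α : ℝ → ℝ) (hα_mono : StrictMono α) (hα_zero : α 0 = 0)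
    (h0 : h (x 0) ≥ 0)
    (hcbf : ∀ t : ℝ, 0 ≤ t → fderiv ℝ h (x t) (g (x t) (u t)) ≥ -α (h (x t))) :
    ∀ t : ℝ, 0 ≤ t → x t ∈ {p : E | h p ≥ 0} := by
  set y : ℝ → ℝ := fun t => h (x t) with hy
  have hyderiv : ∀ t : ℝ, HasDerivAt y (fderiv ℝ h (x t) (deriv x t)) t := by
    intro t
    exact (hh_diff (x t)).hasFDerivAt.comp_hasDerivAt t (hx_diff t).hasDerivAt
  have hydiff : Differentiable ℝ y := fun t => (hyderiv t).differentiableAt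
  have key : ∀ t : ℝ, 0 ≤ t → y t < 0 → 0 < deriv y t := by
    intro t ht hneg
    have hd : deriv y t = fderiv ℝ h (x t) (g (x t) (u t)) := by
      rw [(hyderiv t).deriv, hdyn t ht]
    rw [hd]
    have : α (y t) < α 0 := hα_mono hneg
    have : -α (y t) > 0 := by rw [hα_zero] at this; linarith
    exact lt_of_lt_of_le this (hcbf t ht)
  intro t₁ ht₁
  by_contra hcon
  simp only [Set.mem_setOf_eq, ge_iff_le, not_le] at hcon
  -- hcon : h (x t₁) < 0, i.e. y t₁ < 0
  have hy1 : y t₁ < 0 := hcon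
  have ht₁pos : 0 < t₁ := by
    rcases lt_or_eq_of_le ht₁ with h' | h'
    · exact h'
    · exfalso; rw [← h'] at hy1; exact absurd h0 (not_le.mpr hy1)
  set A : Set ℝ := {t | t ∈ Set.Icc (0:ℝ) t₁ ∧ 0 ≤ y t} with hA
  have hA_closed : IsClosed A := by
    apply IsClosed.inter isClosed_Icc
    exact isClosed_le continuous_const (hydiff.continuous)
  have hA_nonempty : A.Nonempty := ⟨0, ⟨le_refl 0, le_of_lt ht₁pos⟩, h0⟩
  have hA_bdd : BddAbove A := ⟨t₁, fun t ht => ht.1.2⟩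
  set s := sSup A with hs
  have hsA : s ∈ A := hA_closed.csSup_mem hA_nonempty hA_bdd
  have hs0 : 0 ≤ s := hsA.1.1
  have hst : s ≤ t₁ := hsA.1.2
  have hys : 0 ≤ y s := hsA.2
  have hslt : s < t₁ := lt_of_le_of_ne hst (by intro heq; rw [heq] at hys; exact absurd hys (not_le.mpr hy1))
  have hneg : ∀ t, s < t → t ≤ t₁ → y t < 0 := by
    intro t hts htt
    by_contra hge
    push_neg at hge
    have : t ∈ A := ⟨⟨le_trans hs0 hts.le, htt⟩, hge⟩
    exact absurd (le_csSup hA_bdd this) (not_le.mpr hts)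
  have hmono : StrictMonoOn y (Set.Icc s t₁) := by
    apply strictMonoOn_of_deriv_pos (convex_Icc s t₁) (hydiff.continuous.continuousOn)
    intro t ht
    rw [interior_Icc] at ht
    exact key t (le_trans hs0 ht.1.le) (hneg t ht.1 ht.2.le)
  have := hmono ⟨le_refl s, hst⟩ ⟨hst, le_refl t₁⟩ hslt
  linarith
end

section
/- Let E be a finite-dimensional real normed vector space, let S ⊆ E be a nonempty closed set, and let f : E → ℝ be the distance function f(p) = infDist(p, S) = inf_{s ∈ S} ‖p − s‖. If x ∉ S and f is differentiable at x, then the derivative Df(x) has operator norm exactly 1. -/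
open Metric AffineMap

/-! Being `1`-Lipschitz, the distance function has derivative of norm at most `1`. Conversely,
it decreases at unit rate along the segment from `x` to a nearest point `y ∈ S`, so the
derivative sends `y - x` to `-‖y - x‖`, and `‖Df(x)‖ ≥ 1`. -/

section NearestPoint

variable {E : Type*} [NormedAddCommGroup E] [NormedSpace ℝ E] {S : Set E} {x y : E}

theorem infDist_lineMap_of_infDist_eq_dist (hy : y ∈ S) (hxy : infDist x S = dist x y)
    {t : ℝ} (ht : t ∈ Set.Icc (0 : ℝ) 1) :
    infDist (lineMap x y t) S = (1 - t) * dist x y := by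
  have hdist_left : dist (lineMap x y t) x = t * dist x y := by
    rw [dist_lineMap_left, Real.norm_of_nonneg ht.1]
  have hdist_right : dist (lineMap x y t) y = (1 - t) * dist x y := by
    rw [dist_lineMap_right, Real.norm_of_nonneg (sub_nonneg.2 ht.2)]
  apply le_antisymm
  · exact hdist_right ▸ infDist_le_dist_of_mem hy
  · have := infDist_le_infDist_add_dist (x := x) (y := lineMap x y t) (s := S)
    rw [dist_comm, hdist_left, hxy] at this
    linarith

theorem fderiv_infDist_apply_sub_of_infDist_eq_dist (hy : y ∈ S)
    (hxy : infDist x S = dist x y) (hdiff : DifferentiableAt ℝ (fun p => infDist p S) x) :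
    fderiv ℝ (fun p => infDist p S) x (y - x) = -dist x y := by
  have hdist_along : HasDerivWithinAt (fun t : ℝ => infDist (lineMap x y t) S)
      (fderiv ℝ (fun p => infDist p S) x (y - x)) (Set.Icc 0 1) 0 :=
    (hdiff.hasFDerivAt.comp_hasDerivAt_of_eq 0 hasDerivAt_lineMap
      (lineMap_apply_zero x y).symm).hasDerivWithinAt
  have hlinear : HasDerivWithinAt (fun t : ℝ => (1 - t) * dist x y) (-dist x y)
      (Set.Icc (0 : ℝ) 1) 0 := by
    simpa using (((hasDerivAt_id (0 : ℝ)).const_sub 1).mul_const (dist x y)).hasDerivWithinAt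
  have hzero : (0 : ℝ) ∈ Set.Icc 0 1 := by simp
  refine (uniqueDiffOn_Icc one_pos 0 hzero).eq_deriv _ ?_ hlinear
  exact hdist_along.congr_of_mem
    (fun t ht => (infDist_lineMap_of_infDist_eq_dist hy hxy ht).symm) hzero

end NearestPoint

/-- (Eikonal equation) The distance function to a nonempty closed set
`S` in a finite-dimensional real normed vector space has derivative of operator norm
exactly `1` at every point of differentiability outside `S`. -/
theorem norm_fderiv_infDist_eq_one {E : Type*} [NormedAddCommGroup E] [NormedSpace ℝ E]
    [FiniteDimensional ℝ E] (S : Set E) (hne : S.Nonempty) (hclosed : IsClosed S)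
    (x : E) (hx : x ∉ S)
    (hdiff : DifferentiableAt ℝ (fun p => infDist p S) x) :
    ‖fderiv ℝ (fun p => infDist p S) x‖ = 1 := by
  obtain ⟨y, hy, hxy⟩ := hclosed.exists_infDist_eq_dist hne x
  have hpos : 0 < ‖y - x‖ := by
    rw [← dist_eq_norm', ← hxy]
    exact (hclosed.notMem_iff_infDist_pos hne).1 hx
  apply le_antisymm
  · simpa using norm_fderiv_le_of_lipschitz ℝ (x₀ := x) (lipschitz_infDist_pt S)
  · calc (1 : ℝ) = ‖fderiv ℝ (fun p => infDist p S) x (y - x)‖ / ‖y - x‖ := by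
          rw [fderiv_infDist_apply_sub_of_infDist_eq_dist hy hxy hdiff, norm_neg,
            dist_eq_norm', Real.norm_of_nonneg hpos.le, div_self hpos.ne']
      _ ≤ _ := ContinuousLinearMap.ratio_le_opNorm _ _
end
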